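/- Let M be a magma and let S be a closure system of congruences on M satisfying: (i) the least element of S is the identity (diagonal) congruence on M; (ii) for all θ, φ ∈ S, the S-join of θ and φ equals, as a binary relation, the composition θ ∘ φ; and (iii) for every subset X of S and all a, b in M, if the pair (a, b) belongs to the S-join of X then there exists a finite subset Y of X with (a, b) in the S-join of Y. Then for every subset X of S, the S-join of X equals the supremum of X in the full congruence lattice of M; consequently, the supremum in the full congruence lattice of every subset of S belongs to S, i.e., S is a complete sublattice of the congruence lattice of M. -/

import Mathlib

/-!
By (iii) every pair in an `S`-join of `X` already lies in the `S`-join of a finite `Y ⊆ X`,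
so it suffices to show `sJoin S Y ≤ sSup Y` for finite `Y`, by induction on `Y`. The `S`-join
of `∅` is the diagonal by (i), and `sJoin S (insert θ Y) = sJoin S {θ, sJoin S Y}`; by (ii) a
pair in the latter is linked through some `c` by `θ` and by `sJoin S Y ≤ sSup Y`, hence lies
in `θ ⊔ sSup Y` by transitivity.
-/

section CompleteLattice

variable {α : Type*} [CompleteLattice α] (S : Set α)

def sJoin (X : Set α) : α := sInf (S ∩ upperBounds X)

variable {S} {X Y : Set α} {θ φ ψ : α}

theorem le_sJoin (h : θ ∈ X) : θ ≤ sJoin S X :=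
  le_sInf fun _ hψ => hψ.2 h

theorem sSup_le_sJoin : sSup X ≤ sJoin S X :=
  sSup_le fun _ => le_sJoin

theorem sJoin_mem (hS : ∀ T ⊆ S, sInf T ∈ S) : sJoin S X ∈ S :=
  hS _ Set.inter_subset_left

theorem sJoin_le_iff (hψ : ψ ∈ S) : sJoin S X ≤ ψ ↔ ψ ∈ upperBounds X :=
  ⟨fun h _ hθ => (le_sJoin hθ).trans h, fun h => sInf_le ⟨hψ, h⟩⟩

theorem sJoin_empty : sJoin S ∅ = sInf S := by
  rw [sJoin, upperBounds_empty, Set.inter_univ]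

theorem sJoin_insert : sJoin S (insert θ Y) = sJoin S {θ, sJoin S Y} := by
  unfold sJoin
  congr 1
  ext ψ
  simp only [Set.mem_inter_iff, upperBounds_insert, upperBounds_singleton, Set.mem_Ici]
  exact and_congr_right fun hψ => and_congr_right fun _ => (sJoin_le_iff hψ).symm

theorem sJoin_pair : sJoin S {θ, φ} = sInf {ψ | ψ ∈ S ∧ θ ≤ ψ ∧ φ ≤ ψ} := by
  simp only [sJoin, upperBounds_insert, upperBounds_singleton]
  rfl

theorem sJoin_le_sSup_of_finite (hS : ∀ T ⊆ S, sInf T ∈ S) (hbot : sInf S = ⊥)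
    (hpair : ∀ θ ∈ S, ∀ φ ∈ S, sJoin S {θ, φ} ≤ θ ⊔ φ) (hY : Y.Finite) (hYS : Y ⊆ S) :
    sJoin S Y ≤ sSup Y := by
  induction Y, hY using Set.Finite.induction_on with
  | empty => rw [sJoin_empty, hbot]; exact bot_le
  | @insert θ Y _ _ ih =>
    have hθ : θ ∈ S := hYS (Set.mem_insert θ Y)
    calc sJoin S (insert θ Y) = sJoin S {θ, sJoin S Y} := sJoin_insert
      _ ≤ θ ⊔ sJoin S Y := hpair θ hθ _ (sJoin_mem hS)
      _ ≤ θ ⊔ sSup Y := sup_le_sup_left (ih ((Set.subset_insert θ Y).trans hYS)) θ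
      _ = sSup (insert θ Y) := sSup_insert.symm

end CompleteLattice

namespace Con

variable {M : Type*} [Mul M]

theorem le_sup_of_forall_exists {χ θ φ : Con M} (h : ∀ a b, χ a b → ∃ c, θ a c ∧ φ c b) :
    χ ≤ θ ⊔ φ := fun a b hab =>
  let ⟨_, hac, hcb⟩ := h a b hab
  (θ ⊔ φ).trans (le_sup_left (a := θ) hac) (le_sup_right (a := θ) hcb)

end Con

/-- The lattice-theoretic content of the paper's main theorem (Theorem 3):
if `S` is a closure system of congruences on a magma whose least element is
the identity congruence, whose binary `S`-joins are given by relation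
composition, and whose `S`-joins are "finitary" on pairs, then `S`-joins agree
with suprema in the full congruence lattice, so `S` is a complete sublattice
of the congruence lattice. -/
theorem sJoin_eq_sSup_of_perm {M : Type*} [Mul M] (S : Set (Con M))
    (hS : ∀ T ⊆ S, sInf T ∈ S)
    (hbot : ∀ a b : M, (sInf S) a b ↔ a = b)
    (hcomp : ∀ θ ∈ S, ∀ φ ∈ S, ∀ a b : M,
      (sInf {ψ | ψ ∈ S ∧ θ ≤ ψ ∧ φ ≤ ψ}) a b ↔ ∃ c, θ a c ∧ φ c b)
    (hfin : ∀ X ⊆ S, ∀ a b : M,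
      (sInf {ψ | ψ ∈ S ∧ ∀ θ ∈ X, θ ≤ ψ}) a b →
        ∃ Y ⊆ X, Y.Finite ∧ (sInf {ψ | ψ ∈ S ∧ ∀ θ ∈ Y, θ ≤ ψ}) a b) :
    ∀ X ⊆ S, sInf {ψ | ψ ∈ S ∧ ∀ θ ∈ X, θ ≤ ψ} = sSup X ∧ sSup X ∈ S := by
  have hpair : ∀ θ ∈ S, ∀ φ ∈ S, sJoin S {θ, φ} ≤ θ ⊔ φ := fun θ hθ φ hφ =>
    Con.le_sup_of_forall_exists fun a b h => (hcomp θ hθ φ hφ a b).1 (by rwa [sJoin_pair] at h)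
  have hfinite : ∀ Y ⊆ S, Y.Finite → sJoin S Y ≤ sSup Y := fun Y hYS hY =>
    sJoin_le_sSup_of_finite hS (Con.ext hbot) hpair hY hYS
  intro X hX
  have hX_eq : sJoin S X = sSup X := by
    refine le_antisymm (fun a b hab => ?_) sSup_le_sJoin
    obtain ⟨Y, hYX, hY, hab⟩ := hfin X hX a b hab
    exact sSup_le_sSup hYX (hfinite Y (hYX.trans hX) hY hab)
  exact ⟨hX_eq, hX_eq ▸ sJoin_mem hS⟩
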